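/- For every unit vector ψ in ℂ²⊗ℂ²⊗ℂ² there exist orthonormal bases {a₀,a₁}, {b₀,b₁}, {c₀,c₁} of the three factors and complex coefficients λ₁, …, λ₅ with Σᵢ|λᵢ|² = 1 such that ψ = λ₁·a₀⊗b₀⊗c₀ + λ₂·a₁⊗b₁⊗c₀ + λ₃·a₁⊗b₀⊗c₁ + λ₄·a₀⊗b₁⊗c₁ + λ₅·a₁⊗b₁⊗c₁; equivalently, ⟨a₁⊗b₀⊗c₀, ψ⟩ = ⟨a₀⊗b₁⊗c₀, ψ⟩ = ⟨a₀⊗b₀⊗c₁, ψ⟩ = 0 in this product basis. -/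

import Mathlib

/-!
Take a product state `a₀ ⊗ b₀ ⊗ c₀` of maximal overlap `|⟪a₀ ⊗ b₀ ⊗ c₀, ψ⟫|` with `ψ`; it exists
because the product of three unit spheres is compact. With `b₀, c₀` fixed, `u ↦ ⟪u ⊗ b₀ ⊗ c₀, ψ⟫`
is `u ↦ ⟪u, w⟫` for some `w`, and `a₀` maximizes `|⟪u, w⟫|` over unit vectors `u`. By Bessel's
inequality this forces `⟪a₁, w⟫ = 0` for the unit vector `a₁ ⊥ a₀`. Doing the same in the other two
factors kills the coefficients of `a₁b₀c₀`, `a₀b₁c₀` and `a₀b₀c₁` in the product basis. Expanding `ψ`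
in that orthonormal basis then leaves five terms, and Parseval gives `∑ |λᵢ|² = ‖ψ‖² = 1`.
-/

open scoped ComplexInnerProductSpace

/-- The product state `a ⊗ b ⊗ c` of three qubits, as a vector in
`ℂ² ⊗ ℂ² ⊗ ℂ² ≃ ℂ^(2×2×2)` with the standard inner product, so that
`⟪prod3 a b c, prod3 x y z⟫ = ⟪a,x⟫ * ⟪b,y⟫ * ⟪c,z⟫`. -/
noncomputable def prod3 (a b c : EuclideanSpace ℂ (Fin 2)) :
    EuclideanSpace ℂ (Fin 2 × Fin 2 × Fin 2) :=
  WithLp.toLp 2 (fun p : Fin 2 × Fin 2 × Fin 2 => a p.1 * b p.2.1 * c p.2.2)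

local notation "ℂ²" => EuclideanSpace ℂ (Fin 2)
local notation "ℂ²⊗³" => EuclideanSpace ℂ (Fin 2 × Fin 2 × Fin 2)

theorem continuous_prod3 : Continuous fun t : ℂ² × ℂ² × ℂ² => prod3 t.1 t.2.1 t.2.2 := by
  unfold prod3
  fun_prop

theorem inner_prod3_prod3 (a b c x y z : ℂ²) :
    ⟪prod3 a b c, prod3 x y z⟫ = ⟪a, x⟫ * ⟪b, y⟫ * ⟪c, z⟫ := by
  simp only [prod3, PiLp.inner_apply, RCLike.inner_apply, Fintype.sum_prod_type, map_mul,
    Fin.sum_univ_two]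
  ring

theorem orthonormal_prod3 {ι κ ν : Type*} {a : ι → ℂ²} {b : κ → ℂ²} {c : ν → ℂ²}
    (ha : Orthonormal ℂ a) (hb : Orthonormal ℂ b) (hc : Orthonormal ℂ c) :
    Orthonormal ℂ fun p : ι × κ × ν => prod3 (a p.1) (b p.2.1) (c p.2.2) := by
  classical
  rw [orthonormal_iff_ite] at ha hb hc ⊢
  rintro ⟨i, j, k⟩ ⟨i', j', k'⟩
  simp only [inner_prod3_prod3, ha, hb, hc, Prod.mk.injEq]
  split_ifs <;> simp_all

noncomputable def OrthonormalBasis.prod3 (a b c : OrthonormalBasis (Fin 2) ℂ ℂ²) :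
    OrthonormalBasis (Fin 2 × Fin 2 × Fin 2) ℂ ℂ²⊗³ :=
  OrthonormalBasis.mk (orthonormal_prod3 a.orthonormal b.orthonormal c.orthonormal) <|
    (orthonormal_prod3 a.orthonormal b.orthonormal c.orthonormal).linearIndependent
      |>.span_eq_top_of_card_eq_finrank (by simp) |>.ge

@[simp]
theorem OrthonormalBasis.prod3_apply (a b c : OrthonormalBasis (Fin 2) ℂ ℂ²)
    (p : Fin 2 × Fin 2 × Fin 2) : a.prod3 b c p = _root_.prod3 (a p.1) (b p.2.1) (c p.2.2) := by
  simp [OrthonormalBasis.prod3]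

theorem exists_orthonormalBasis_apply_eq {𝕜 E ι : Type*} [RCLike 𝕜] [NormedAddCommGroup E]
    [InnerProductSpace 𝕜 E] [FiniteDimensional 𝕜 E] [Fintype ι]
    (hcard : Module.finrank 𝕜 E = Fintype.card ι) (i : ι) {v : E} (hv : ‖v‖ = 1) : ∃ b : OrthonormalBasis ι 𝕜 E, b i = v := by
  obtain ⟨b, hb⟩ := Orthonormal.exists_orthonormalBasis_extension_of_card_eq hcard
    (v := fun _ => v) (s := {i}) (by simpa [orthonormal_iff_ite] using hv)
  exact ⟨b, hb i rfl⟩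

theorem Orthonormal.inner_eq_zero_of_forall_norm_inner_le {𝕜 E ι : Type*} [RCLike 𝕜]
    [NormedAddCommGroup E] [InnerProductSpace 𝕜 E] {a : ι → E} (ha : Orthonormal 𝕜 a)
    {i j : ι} (hij : i ≠ j) {w : E}
    (hmax : ∀ u : E, ‖u‖ = 1 → ‖inner 𝕜 u w‖ ≤ ‖inner 𝕜 (a i) w‖) : inner 𝕜 (a j) w = 0 := by
  classical
  have hbessel := ha.sum_inner_products_le w (s := {i, j})
  rw [Finset.sum_pair hij] at hbessel
  have hw : ‖w‖ ≤ ‖inner 𝕜 (a i) w‖ := by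
    rcases eq_or_ne w 0 with rfl | hw
    · simp
    convert hmax _ (norm_smul_inv_norm hw) using 1
    rw [inner_smul_left, inner_self_eq_norm_sq_to_K, norm_mul, RCLike.norm_conj, norm_inv, norm_pow,
      RCLike.norm_ofReal, abs_norm]
    field_simp
  have : ‖inner 𝕜 (a j) w‖ ^ 2 ≤ 0 := by nlinarith [norm_nonneg w]
  simpa using this

theorem exists_inner_prod3_eq_inner_left (ψ : ℂ²⊗³) (b c : ℂ²) :
    ∃ w : ℂ², ∀ a, ⟪prod3 a b c, ψ⟫ = ⟪a, w⟫ :=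
  ⟨WithLp.toLp 2 fun i => ∑ j, ∑ k, starRingEnd ℂ (b j * c k) * ψ (i, j, k), fun a => by
    simp only [prod3, PiLp.inner_apply, RCLike.inner_apply, Fintype.sum_prod_type,
      Fin.sum_univ_two, map_mul]
    ring⟩

theorem exists_inner_prod3_eq_inner_middle (ψ : ℂ²⊗³) (a c : ℂ²) :
    ∃ w : ℂ², ∀ b, ⟪prod3 a b c, ψ⟫ = ⟪b, w⟫ :=
  ⟨WithLp.toLp 2 fun j => ∑ i, ∑ k, starRingEnd ℂ (a i * c k) * ψ (i, j, k), fun b => by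
    simp only [prod3, PiLp.inner_apply, RCLike.inner_apply, Fintype.sum_prod_type,
      Fin.sum_univ_two, map_mul]
    ring⟩

theorem exists_inner_prod3_eq_inner_right (ψ : ℂ²⊗³) (a b : ℂ²) :
    ∃ w : ℂ², ∀ c, ⟪prod3 a b c, ψ⟫ = ⟪c, w⟫ :=
  ⟨WithLp.toLp 2 fun k => ∑ i, ∑ j, starRingEnd ℂ (a i * b j) * ψ (i, j, k), fun c => by
    simp only [prod3, PiLp.inner_apply, RCLike.inner_apply, Fintype.sum_prod_type,
      Fin.sum_univ_two, map_mul]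
    ring⟩

theorem exists_forall_norm_inner_prod3_le (ψ : ℂ²⊗³) :
    ∃ a b c : ℂ², ‖a‖ = 1 ∧ ‖b‖ = 1 ∧ ‖c‖ = 1 ∧ ∀ x y z : ℂ², ‖x‖ = 1 → ‖y‖ = 1 → ‖z‖ = 1 →
      ‖⟪prod3 x y z, ψ⟫‖ ≤ ‖⟪prod3 a b c, ψ⟫‖ := by
  let S := Metric.sphere (0 : ℂ²) 1
  have hS : IsCompact (S ×ˢ S ×ˢ S) :=
    (isCompact_sphere 0 1).prod ((isCompact_sphere 0 1).prod (isCompact_sphere 0 1))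
  have hSne : S.Nonempty := NormedSpace.sphere_nonempty.2 zero_le_one
  have hcont : Continuous fun t : ℂ² × ℂ² × ℂ² => ‖⟪prod3 t.1 t.2.1 t.2.2, ψ⟫‖ :=
    (continuous_prod3.inner continuous_const).norm
  obtain ⟨⟨a, b, c⟩, ⟨ha, hb, hc⟩, hmax⟩ := hS.exists_isMaxOn (hSne.prod (hSne.prod hSne))
    hcont.continuousOn
  rw [mem_sphere_zero_iff_norm] at ha hb hc
  exact ⟨a, b, c, ha, hb, hc, fun x y z hx hy hz => isMaxOn_iff.1 hmax (x, y, z)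
    ⟨mem_sphere_zero_iff_norm.2 hx, mem_sphere_zero_iff_norm.2 hy, mem_sphere_zero_iff_norm.2 hz⟩⟩

theorem inner_prod3_eq_zero_of_forall_norm_inner_prod3_le {ψ : ℂ²⊗³} {a b c : Fin 2 → ℂ²}
    (ha : Orthonormal ℂ a) (hb : Orthonormal ℂ b) (hc : Orthonormal ℂ c)
    (hmax : ∀ x y z : ℂ², ‖x‖ = 1 → ‖y‖ = 1 → ‖z‖ = 1 →
      ‖⟪prod3 x y z, ψ⟫‖ ≤ ‖⟪prod3 (a 0) (b 0) (c 0), ψ⟫‖) :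
    ⟪prod3 (a 1) (b 0) (c 0), ψ⟫ = 0 ∧ ⟪prod3 (a 0) (b 1) (c 0), ψ⟫ = 0 ∧
      ⟪prod3 (a 0) (b 0) (c 1), ψ⟫ = 0 := by
  obtain ⟨wa, hwa⟩ := exists_inner_prod3_eq_inner_left ψ (b 0) (c 0)
  obtain ⟨wb, hwb⟩ := exists_inner_prod3_eq_inner_middle ψ (a 0) (c 0)
  obtain ⟨wc, hwc⟩ := exists_inner_prod3_eq_inner_right ψ (a 0) (b 0)
  refine ⟨?_, ?_, ?_⟩
  · rw [hwa]
    exact ha.inner_eq_zero_of_forall_norm_inner_le zero_ne_one fun u hu => by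
      simpa only [hwa] using hmax u _ _ hu (hb.1 0) (hc.1 0)
  · rw [hwb]
    exact hb.inner_eq_zero_of_forall_norm_inner_le zero_ne_one fun u hu => by
      simpa only [hwb] using hmax _ u _ (ha.1 0) hu (hc.1 0)
  · rw [hwc]
    exact hc.inner_eq_zero_of_forall_norm_inner_le zero_ne_one fun u hu => by
      simpa only [hwc] using hmax _ _ u (ha.1 0) (hb.1 0) hu

/-- **Generalized Schmidt decomposition of a three-qubit pure state**: every unit vector in
`ℂ² ⊗ ℂ² ⊗ ℂ²` admits a five-term expansion
`ψ = λ₁ a₀b₀c₀ + λ₂ a₁b₁c₀ + λ₃ a₁b₀c₁ + λ₄ a₀b₁c₁ + λ₅ a₁b₁c₁`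
in suitable orthonormal bases of the three factors; equivalently the coefficients of
`a₁b₀c₀`, `a₀b₁c₀` and `a₀b₀c₁` vanish. -/
theorem generalized_schmidt_three_qubits
    (ψ : EuclideanSpace ℂ (Fin 2 × Fin 2 × Fin 2)) (hψ : ‖ψ‖ = 1) :
    ∃ a b c : Fin 2 → EuclideanSpace ℂ (Fin 2),
      Orthonormal ℂ a ∧ Orthonormal ℂ b ∧ Orthonormal ℂ c ∧
      ∃ l : Fin 5 → ℂ, (∑ i, ‖l i‖ ^ 2) = 1 ∧
        ψ = l 0 • prod3 (a 0) (b 0) (c 0) + l 1 • prod3 (a 1) (b 1) (c 0) +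
            l 2 • prod3 (a 1) (b 0) (c 1) + l 3 • prod3 (a 0) (b 1) (c 1) +
            l 4 • prod3 (a 1) (b 1) (c 1) ∧
        ⟪prod3 (a 1) (b 0) (c 0), ψ⟫ = 0 ∧
        ⟪prod3 (a 0) (b 1) (c 0), ψ⟫ = 0 ∧
        ⟪prod3 (a 0) (b 0) (c 1), ψ⟫ = 0 := by
  obtain ⟨a₀, b₀, c₀, ha₀, hb₀, hc₀, hmax⟩ := exists_forall_norm_inner_prod3_le ψ
  have hdim : Module.finrank ℂ ℂ² = Fintype.card (Fin 2) := by simp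
  obtain ⟨a, rfl⟩ := exists_orthonormalBasis_apply_eq hdim 0 ha₀
  obtain ⟨b, rfl⟩ := exists_orthonormalBasis_apply_eq hdim 0 hb₀
  obtain ⟨c, rfl⟩ := exists_orthonormalBasis_apply_eq hdim 0 hc₀
  obtain ⟨h100, h010, h001⟩ := inner_prod3_eq_zero_of_forall_norm_inner_prod3_le
    a.orthonormal b.orthonormal c.orthonormal hmax
  have hexp := (a.prod3 b c).sum_repr' ψ
  have hparseval := (a.prod3 b c).sum_sq_norm_inner_right ψ
  simp only [OrthonormalBasis.prod3_apply, Fintype.sum_prod_type, Fin.sum_univ_two,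
    h100, h010, h001] at hexp hparseval
  refine ⟨a, b, c, a.orthonormal, b.orthonormal, c.orthonormal,
    ![⟪prod3 (a 0) (b 0) (c 0), ψ⟫, ⟪prod3 (a 1) (b 1) (c 0), ψ⟫, ⟪prod3 (a 1) (b 0) (c 1), ψ⟫,
      ⟪prod3 (a 0) (b 1) (c 1), ψ⟫, ⟪prod3 (a 1) (b 1) (c 1), ψ⟫], ?_, ?_, h100, h010, h001⟩
  · rw [hψ, one_pow] at hparseval
    rw [Fin.sum_univ_five, ← hparseval]
    simp only [Matrix.cons_val_zero, Matrix.cons_val_one, Matrix.cons_val, norm_zero, ne_eq,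
      OfNat.ofNat_ne_zero, not_false_eq_true, zero_pow, add_zero, zero_add]
    ring
  · conv_lhs => rw [← hexp]
    simp only [zero_smul, add_zero, zero_add, Matrix.cons_val_zero, Matrix.cons_val_one,
      Matrix.cons_val]
    abel
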